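/- arXiv:0903.1380 — 5 statements merged into one kernel-verified Lean document; each statement's English description precedes it below -/
import Mathlib

section
/- Erdős–Mordell Theorem: For any point M inside (or on the boundary of) a triangle ABC, the sum of distances from M to the vertices A, B, C is at least twice the sum of distances from M to the three sides of the triangle. -/
/-!
Write `a, b, c` for the side lengths `BC, CA, AB` and `d_a, d_b, d_c` for the distances from `M`
to the side lines. With `u = B - A`, `v = C - A` and `M - A = β u + γ v` (`β, γ ≥ 0`), the
vector `β (c / b) v + γ (b / c) u` is the reflection of `M - A` in the bisector of the angle at `A`,
so it has length `MA`; its cross product with `C - B = v - u` has absolute value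
`(β c / b + γ b / c) |u × v|`, while `b d_b = β |u × v|` and `c d_c = γ |u × v|`. Hence
`a · MA ≥ c d_b + b d_c`. Adding the three inequalities of this kind, `d_a` gets the coefficient
`c / b + b / c ≥ 2`, and similarly `d_b, d_c`.
-/

open Metric Module

theorem exists_nonneg_sub_eq_of_mem_convexHull_triple {𝕜 E : Type*} [Field 𝕜] [LinearOrder 𝕜]
    [IsStrictOrderedRing 𝕜] [AddCommGroup E] [Module 𝕜 E] {A B C M : E}
    (hM : M ∈ convexHull 𝕜 {A, B, C}) :
    ∃ β γ : 𝕜, 0 ≤ β ∧ 0 ≤ γ ∧ M - A = β • (B - A) + γ • (C - A) := by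
  rw [convexHull_insert (Set.insert_nonempty B {C}), convexHull_pair,
    convexJoin_singleton_left, Set.mem_iUnion₂] at hM
  obtain ⟨N, ⟨s, t, hs, ht, hst, rfl⟩, θ, θ', -, hθ', hθθ', rfl⟩ := hM
  refine ⟨θ' * s, θ' * t, mul_nonneg hθ' hs, mul_nonneg hθ' ht, ?_⟩
  linear_combination (norm := module) hθθ' • A + (θ' * hst) • A

theorem two_le_div_add_div {𝕜 : Type*} [Field 𝕜] [LinearOrder 𝕜] [IsStrictOrderedRing 𝕜]
    {p q : 𝕜} (hp : 0 < p) (hq : 0 < q) : 2 ≤ p / q + q / p := by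
  rw [div_add_div _ _ hq.ne' hp.ne', le_div_iff₀ (by positivity)]
  nlinarith [sq_nonneg (p - q)]

namespace Orientation

variable {V : Type*} [NormedAddCommGroup V] [InnerProductSpace ℝ V] [Fact (finrank ℝ V = 2)]
  (o : Orientation ℝ V (Fin 2))

local notation "ω" => o.areaForm

theorem infDist_affineSpan_pair_le {B C : V} (h : B ≠ C) (p : V) :
    infDist p (affineSpan ℝ {B, C}) ≤ |ω (C - B) (p - B)| / ‖C - B‖ := by
  set x := C - B
  set y := p - B
  have hx : 0 < ‖x‖ := norm_pos_iff.2 (sub_ne_zero.2 h.symm)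
  set t := inner ℝ x y / ‖x‖ ^ 2
  refine (infDist_le_dist_of_mem (AffineMap.lineMap_mem_affineSpan_pair t B C)).trans_eq ?_
  have hfoot : p - AffineMap.lineMap B C t = y - t • x := by
    simp only [AffineMap.lineMap_apply, vsub_eq_sub, vadd_eq_add, x, y]; abel
  rw [dist_eq_norm, hfoot, ← sq_eq_sq₀ (norm_nonneg _) (by positivity), div_pow, sq_abs,
    norm_sub_sq_real, norm_smul, real_inner_smul_right, Real.norm_eq_abs, mul_pow, sq_abs,
    eq_div_iff (by positivity), real_inner_comm]
  simp only [t]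
  field_simp
  linear_combination -o.inner_sq_add_areaForm_sq x y

theorem norm_div_mul_abs_areaForm_add_le {u v : V} (hu : u ≠ 0) (hv : v ≠ 0) {β γ : ℝ}
    (hβ : 0 ≤ β) (hγ : 0 ≤ γ) :
    ‖u‖ / ‖v‖ * |ω v (β • u + γ • v)| + ‖v‖ / ‖u‖ * |ω u (β • u + γ • v)| ≤
      ‖v - u‖ * ‖β • u + γ • v‖ := by
  have hu' : 0 < ‖u‖ := norm_pos_iff.2 hu
  have hv' : 0 < ‖v‖ := norm_pos_iff.2 hv
  set κ := β * (‖u‖ / ‖v‖) + γ * (‖v‖ / ‖u‖)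
  have hκ : 0 ≤ κ := by positivity
  -- the reflection of `β • u + γ • v` exchanging `u / ‖u‖` and `v / ‖v‖`
  set w := (β * (‖u‖ / ‖v‖)) • v + (γ * (‖v‖ / ‖u‖)) • u
  have hw : ‖w‖ = ‖β • u + γ • v‖ := by
    rw [← sq_eq_sq₀ (norm_nonneg _) (norm_nonneg _), norm_add_sq_real, norm_add_sq_real,
      norm_smul, norm_smul, norm_smul, norm_smul, real_inner_smul_left, real_inner_smul_left,
      real_inner_smul_right, real_inner_smul_right, real_inner_comm u v]
    simp only [Real.norm_eq_abs, mul_pow, sq_abs]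
    field_simp
  have hwarea : ω (v - u) w = -κ * ω u v := by
    simp only [w, κ, map_sub, map_add, map_smul, LinearMap.sub_apply, smul_eq_mul,
      o.areaForm_apply_self, o.areaForm_swap v u]
    ring
  have hlhs : ‖u‖ / ‖v‖ * |ω v (β • u + γ • v)| + ‖v‖ / ‖u‖ * |ω u (β • u + γ • v)| =
      κ * |ω u v| := by
    simp only [κ, map_add, map_smul, smul_eq_mul, o.areaForm_apply_self, o.areaForm_swap v u,
      mul_zero, add_zero, zero_add, mul_neg]
    rw [abs_neg, abs_mul, abs_mul, abs_of_nonneg hβ, abs_of_nonneg hγ]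
    ring
  calc _ = |ω (v - u) w| := by
          rw [hlhs, hwarea, abs_mul, abs_neg, abs_of_nonneg hκ]
    _ ≤ ‖v - u‖ * ‖w‖ := o.abs_areaForm_le _ _
    _ = ‖v - u‖ * ‖β • u + γ • v‖ := by rw [hw]

end Orientation

theorem two_mul_add_le_of_mul_add_le {a b c x y z da db dc : ℝ} (ha : 0 < a) (hb : 0 < b)
    (hc : 0 < c) (hda : 0 ≤ da) (hdb : 0 ≤ db) (hdc : 0 ≤ dc)
    (hx : c * db + b * dc ≤ a * x) (hy : a * dc + c * da ≤ b * y)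
    (hz : b * da + a * db ≤ c * z) :
    2 * (da + db + dc) ≤ x + y + z := by
  have hbc := mul_le_mul_of_nonneg_left (two_le_div_add_div hc hb) hda
  have hca := mul_le_mul_of_nonneg_left (two_le_div_add_div hc ha) hdb
  have hab := mul_le_mul_of_nonneg_left (two_le_div_add_div hb ha) hdc
  calc 2 * (da + db + dc)
      ≤ da * (c / b + b / c) + db * (c / a + a / c) + dc * (b / a + a / b) := by linarith
    _ = (c * db + b * dc) / a + (a * dc + c * da) / b + (b * da + a * db) / c := by ring
    _ ≤ x + y + z := by
      gcongr ?_ + ?_ + ?_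
      · exact (div_le_iff₀' ha).2 hx
      · exact (div_le_iff₀' hb).2 hy
      · exact (div_le_iff₀' hc).2 hz

section

variable {V : Type*} [NormedAddCommGroup V] [InnerProductSpace ℝ V] [Fact (finrank ℝ V = 2)]

theorem dist_mul_infDist_add_dist_mul_infDist_le {A B C M : V} (hAB : A ≠ B) (hAC : A ≠ C)
    (hM : M ∈ convexHull ℝ {A, B, C}) :
    dist A B * infDist M (affineSpan ℝ {C, A}) + dist C A * infDist M (affineSpan ℝ {A, B}) ≤
      dist B C * dist M A := by
  have : FiniteDimensional ℝ V := .of_fact_finrank_eq_two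
  let o : Orientation ℝ V (Fin 2) := (finBasisOfFinrankEq ℝ V Fact.out).orientation
  obtain ⟨β, γ, hβ, hγ, hMA⟩ := exists_nonneg_sub_eq_of_mem_convexHull_triple hM
  have hu : B - A ≠ 0 := sub_ne_zero.2 hAB.symm
  have hv : C - A ≠ 0 := sub_ne_zero.2 hAC.symm
  rw [Set.pair_comm C A, dist_comm A B, dist_comm B C, dist_eq_norm, dist_eq_norm,
    dist_eq_norm, dist_eq_norm, ← sub_sub_sub_cancel_right C B A]
  calc ‖B - A‖ * infDist M (affineSpan ℝ {A, C}) + ‖C - A‖ * infDist M (affineSpan ℝ {A, B})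
      ≤ ‖B - A‖ * (|o.areaForm (C - A) (M - A)| / ‖C - A‖) +
          ‖C - A‖ * (|o.areaForm (B - A) (M - A)| / ‖B - A‖) := by
        gcongr
        · exact o.infDist_affineSpan_pair_le hAC M
        · exact o.infDist_affineSpan_pair_le hAB M
    _ = ‖B - A‖ / ‖C - A‖ * |o.areaForm (C - A) (β • (B - A) + γ • (C - A))| +
          ‖C - A‖ / ‖B - A‖ * |o.areaForm (B - A) (β • (B - A) + γ • (C - A))| := by
        rw [hMA]; ring
    _ ≤ ‖(C - A) - (B - A)‖ * ‖M - A‖ := by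
        rw [hMA]; exact o.norm_div_mul_abs_areaForm_add_le hu hv hβ hγ

end

theorem erdos_mordell
    (A B C M : EuclideanSpace ℝ (Fin 2))
    (hABC : AffineIndependent ℝ ![A, B, C])
    (hM : M ∈ convexHull ℝ ({A, B, C} : Set (EuclideanSpace ℝ (Fin 2)))) :
    dist M A + dist M B + dist M C ≥
      2 * (infDist M (affineSpan ℝ ({B, C} : Set (EuclideanSpace ℝ (Fin 2))) : Set _) +
           infDist M (affineSpan ℝ ({C, A} : Set (EuclideanSpace ℝ (Fin 2))) : Set _) +
           infDist M (affineSpan ℝ ({A, B} : Set (EuclideanSpace ℝ (Fin 2))) : Set _)) := by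
  have : Fact (finrank ℝ (EuclideanSpace ℝ (Fin 2)) = 2) := ⟨finrank_euclideanSpace_fin⟩
  have hAB : A ≠ B := hABC.injective.ne (by decide : (0 : Fin 3) ≠ 1)
  have hBC : B ≠ C := hABC.injective.ne (by decide : (1 : Fin 3) ≠ 2)
  have hCA : C ≠ A := hABC.injective.ne (by decide : (2 : Fin 3) ≠ 0)
  have hMB : M ∈ convexHull ℝ {B, C, A} := by rwa [Set.pair_comm C A, Set.insert_comm B A]
  have hMC : M ∈ convexHull ℝ {C, A, B} := by rwa [Set.insert_comm C A, Set.pair_comm C B]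
  exact two_mul_add_le_of_mul_add_le (dist_pos.2 hBC) (dist_pos.2 hCA) (dist_pos.2 hAB)
    infDist_nonneg infDist_nonneg infDist_nonneg
    (dist_mul_infDist_add_dist_mul_infDist_le hAB hCA.symm hM)
    (dist_mul_infDist_add_dist_mul_infDist_le hBC hAB.symm hMB)
    (dist_mul_infDist_add_dist_mul_infDist_le hCA hBC.symm hMC)
end

section
/- For any point M in the interior of a square A₁A₂A₃A₄, the sum of the distances from M to the four vertices is at least √2 times the sum of the distances from M to the four sides. -/
open EuclideanGeometry Metric
open scoped RealInnerProductSpace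

noncomputable section
private abbrev E2 := EuclideanSpace ℝ (Fin 2)

-- Bessel-type lemma
lemma bessel2 (z e f : E2) (he : ‖e‖ = 1) (hf : ‖f‖ = 1) (hef : ⟪e, f⟫ = 0) :
    |⟪z, e⟫| + |⟪z, f⟫| ≤ Real.sqrt 2 * ‖z‖ := by
  set x := ⟪z, e⟫ with hx
  set y := ⟪z, f⟫ with hy
  have hee : ⟪e, e⟫ = 1 := by rw [real_inner_self_eq_norm_sq, he]; norm_num
  have hff : ⟪f, f⟫ = 1 := by rw [real_inner_self_eq_norm_sq, hf]; norm_num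
  have hres : (0:ℝ) ≤ ‖z - x • e - y • f‖^2 := sq_nonneg _
  have hexp : ‖z - x • e - y • f‖^2 = ‖z‖^2 - x^2 - y^2 := by
    rw [← real_inner_self_eq_norm_sq, ← real_inner_self_eq_norm_sq]
    simp only [inner_sub_sub_self, inner_sub_left, inner_sub_right, inner_smul_left,
      inner_smul_right, RCLike.conj_to_real]
    have hfe : ⟪f, e⟫ = (0:ℝ) := by rw [real_inner_comm]; exact hef
    rw [real_inner_comm z e, real_inner_comm z f, hee, hff, hef, hfe, ← hx, ← hy]
    ring
  have h1 : x^2 + y^2 ≤ ‖z‖^2 := by rw [hexp] at hres; linarith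
  have h2 : (|x| + |y|)^2 ≤ (Real.sqrt 2 * ‖z‖)^2 := by
    have : (Real.sqrt 2)^2 = 2 := Real.sq_sqrt (by norm_num)
    have hxa : |x|^2 = x^2 := sq_abs x
    have hya : |y|^2 = y^2 := sq_abs y
    nlinarith [sq_nonneg (|x| - |y|)]
  have h3 : 0 ≤ Real.sqrt 2 * ‖z‖ := by positivity
  nlinarith [abs_nonneg x, abs_nonneg y]

lemma span_pair_top (u v : E2) (h : LinearIndependent ℝ ![u, v]) :
    Submodule.span ℝ ({u, v} : Set E2) = ⊤ := by
  apply Submodule.eq_top_of_finrank_eq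
  have h1 := finrank_span_eq_card h
  have h2 : Set.range ![u, v] = ({u, v} : Set E2) := by
    simp [Matrix.range_cons, Matrix.range_cons_empty]
    exact Set.pair_comm v u
  rw [h2] at h1
  simp only [h1, Fintype.card_fin]
  simp [finrank_euclideanSpace_fin]

lemma parseval2 (e f : E2) (hee : ⟪e, e⟫ = 1) (hff : ⟪f, f⟫ = 1) (hef : ⟪e, f⟫ = 0)
    (z : E2) : z = ⟪z, e⟫ • e + ⟪z, f⟫ • f := by
  have hfe : ⟪f, e⟫ = (0:ℝ) := by rw [real_inner_comm]; exact hef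
  have hli : LinearIndependent ℝ ![e, f] := by
    have he0 : e ≠ 0 := by
      intro h; rw [h] at hee; simp at hee
    rw [LinearIndependent.pair_iff' he0]
    intro c hc
    have h1 : ⟪e, f⟫ = c := by rw [← hc, real_inner_smul_right, hee, mul_one]
    have h2 : c = 0 := by rw [← hef, h1]
    rw [h2, zero_smul] at hc
    rw [← hc] at hff
    simp at hff
  have hz : z ∈ Submodule.span ℝ ({e, f} : Set E2) := by
    rw [span_pair_top e f hli]; trivial
  rcases Submodule.mem_span_pair.1 hz with ⟨a, b, hab⟩
  have hza : ⟪z, e⟫ = a := by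
    rw [← hab, inner_add_left, real_inner_smul_left, real_inner_smul_left, hee, hfe]
    ring
  have hzb : ⟪z, f⟫ = b := by
    rw [← hab, inner_add_left, real_inner_smul_left, real_inner_smul_left, hff, hef]
    ring
  rw [hza, hzb, hab]

lemma foot_bound (P Q M e f : E2)
    (hspan : ∀ z : E2, z = ⟪z, e⟫ • e + ⟪z, f⟫ • f) (hf1 : ‖f‖ = 1)
    (c : ℝ) (hc : c ≠ 0) (hQP : Q - P = c • e) :
    infDist M (affineSpan ℝ ({P, Q} : Set E2) : Set E2) ≤ |⟪M - P, f⟫| := by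
  set x := ⟪M - P, e⟫ with hxd
  set y := ⟪M - P, f⟫ with hyd
  have h3 : M - P = x • e + y • f := hspan (M - P)
  set F : E2 := (x / c) • (Q -ᵥ P) +ᵥ P with hF
  have hmem : F ∈ (affineSpan ℝ ({P, Q} : Set E2) : Set E2) :=
    smul_vsub_vadd_mem_affineSpan_pair _ P Q
  have hdist : dist M F = |y| := by
    have h2 : Q -ᵥ P = c • e := hQP
    have h1 : M - F = y • f := by
      rw [hF, h2, smul_smul, div_mul_cancel₀ _ hc]
      have hv : ((x • e : E2) +ᵥ P) = P + x • e := by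
        rw [vadd_eq_add]; abel
      rw [hv]
      calc M - (P + x • e) = (M - P) - x • e := by abel
        _ = y • f := by rw [h3]; abel
    rw [dist_eq_norm, h1, norm_smul, hf1]
    simp
  calc infDist M (affineSpan ℝ ({P, Q} : Set E2) : Set E2) ≤ dist M F :=
        infDist_le_dist_of_mem hmem
    _ = |y| := hdist

lemma not_interior_pair (P Q M : E2) :
    M ∉ interior (convexHull ℝ ({P, Q} : Set E2)) := by
  intro hM
  have hconv : Convex ℝ (convexHull ℝ ({P, Q} : Set E2)) := convex_convexHull _ _
  have hne : (interior (convexHull ℝ ({P, Q} : Set E2))).Nonempty := ⟨M, hM⟩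
  have htop := hconv.interior_nonempty_iff_affineSpan_eq_top.mp hne
  rw [affineSpan_convexHull] at htop
  have hd := congrArg AffineSubspace.direction htop
  rw [direction_affineSpan, vectorSpan_pair, AffineSubspace.direction_top] at hd
  have h1 : Module.finrank ℝ (ℝ ∙ (P -ᵥ Q) : Submodule ℝ E2) ≤ 1 := by
    by_cases h : (P -ᵥ Q : E2) = 0
    · rw [h, Submodule.span_zero_singleton]; simp
    · rw [finrank_span_singleton h]
  rw [hd] at h1
  rw [finrank_top] at h1
  simp [finrank_euclideanSpace_fin] at h1

lemma core_alg (A p α β : ℝ) (e1 : α*p + β*A = p) (h2' : 2*p + α*A + β*p = -A)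
    (e3 : α^2*A + β^2*A + 2*α*β*p = A) : 4*p*A^3*(A+p)^2 = 0 := by
  have hiii : α*(A^2-p^2) = -(A+p)^2 := by linear_combination A*h2' - p*e1
  have hstar : (A^2+2*p*A)^2 + p^2*(1-α)^2*(A^2-p^2) = A^4 := by
    linear_combination (A^3)*e3 + (A*(A^2+2*p*A - α*A^2 - β*p*A))*h2'
      - ((A^2-p^2)*(p*(1-α)+β*A))*e1
  linear_combination (A^2-p^2)*hstar + (p^2*((1-α)*(A^2-p^2)+2*A^2+2*p*A))*hiii

lemma sum_bound (s2 L1 L2 L3 L4 D1 D2 D3 D4 b1 b2 b3 b4 : ℝ)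
    (hs2 : s2 ^ 2 = 2) (hs2n : 0 ≤ s2)
    (d1 : D1 ≤ b1) (d2 : D2 ≤ b2) (d3 : D3 ≤ b3) (d4 : D4 ≤ b4)
    (B1 : b4 + b1 ≤ s2 * L1) (B2 : b2 + b1 ≤ s2 * L2)
    (B3 : b2 + b3 ≤ s2 * L3) (B4 : b4 + b3 ≤ s2 * L4) :
    L1 + L2 + L3 + L4 ≥ s2 * (D1 + D2 + D3 + D4) := by
  have key : 2 * (D1 + D2 + D3 + D4) ≤ s2 * (L1 + L2 + L3 + L4) := by nlinarith
  have h7 : s2 * s2 = 2 := by nlinarith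
  have h8 := mul_le_mul_of_nonneg_left key hs2n
  have h9 : s2 * (s2 * (L1 + L2 + L3 + L4)) = 2 * (L1 + L2 + L3 + L4) := by
    rw [← mul_assoc, h7]
  linarith [h8, h9]

set_option maxHeartbeats 1000000 in
theorem erdos_mordell_square
    (A₁ A₂ A₃ A₄ M : EuclideanSpace ℝ (Fin 2))
    (hside : 0 < dist A₁ A₂)
    (h12 : dist A₁ A₂ = dist A₂ A₃) (h23 : dist A₂ A₃ = dist A₃ A₄)
    (h34 : dist A₃ A₄ = dist A₄ A₁)
    (hdiag : dist A₁ A₃ = dist A₂ A₄)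
    (hM : M ∈ interior (convexHull ℝ ({A₁, A₂, A₃, A₄} : Set (EuclideanSpace ℝ (Fin 2))))) :
    dist M A₁ + dist M A₂ + dist M A₃ + dist M A₄ ≥
      Real.sqrt 2 *
        (infDist M (affineSpan ℝ ({A₁, A₂} : Set (EuclideanSpace ℝ (Fin 2))) : Set _) +
         infDist M (affineSpan ℝ ({A₂, A₃} : Set (EuclideanSpace ℝ (Fin 2))) : Set _) +
         infDist M (affineSpan ℝ ({A₃, A₄} : Set (EuclideanSpace ℝ (Fin 2))) : Set _) +
         infDist M (affineSpan ℝ ({A₄, A₁} : Set (EuclideanSpace ℝ (Fin 2))) : Set _)) := by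
  set a := dist A₁ A₂ with hadef
  set u : E2 := A₂ - A₁ with hudef
  set v : E2 := A₃ - A₂ with hvdef
  set w : E2 := A₄ - A₃ with hwdef
  have hu : ‖u‖ = a := by rw [hudef, hadef, dist_eq_norm']
  have hv : ‖v‖ = a := by rw [hvdef, h12, dist_eq_norm']
  have hw : ‖w‖ = a := by rw [hwdef, h12, h23, dist_eq_norm']
  have hsum : ‖u + v + w‖ = a := by
    have h0 : u + v + w = A₄ - A₁ := by rw [hudef, hvdef, hwdef]; abel
    rw [h0, h12, h23, h34, dist_eq_norm']
    exact norm_sub_rev _ _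
  have hdg : ‖u + v‖ = ‖v + w‖ := by
    have h1 : u + v = A₃ - A₁ := by rw [hudef, hvdef]; abel
    have h2 : v + w = A₄ - A₂ := by rw [hvdef, hwdef]; abel
    rw [h1, h2, ← norm_sub_rev A₁ A₃, ← norm_sub_rev A₂ A₄, ← dist_eq_norm, ← dist_eq_norm,
      hdiag]
  -- inner product equations
  have hE1 : ⟪u, v⟫ = ⟪v, w⟫ := by
    have h1 : ‖u + v‖ ^ 2 = ‖v + w‖ ^ 2 := by rw [hdg]
    rw [norm_add_sq_real, norm_add_sq_real, hu, hv, hw] at h1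
    linarith
  have hE2 : ⟪u, v⟫ + ⟪u, w⟫ + ⟪v, w⟫ = -a ^ 2 := by
    have h1 : ‖u + v + w‖ ^ 2 = a ^ 2 := by rw [hsum]
    rw [norm_add_sq_real, norm_add_sq_real, hu, hv, hw, inner_add_left] at h1
    linarith
  have hu0 : u ≠ 0 := by
    intro h
    rw [h, norm_zero] at hu
    exact absurd hu.symm (ne_of_gt hside)
  by_cases hdep : ∃ c : ℝ, c • u = v
  · -- degenerate: v = ± u
    obtain ⟨c, hc⟩ := hdep
    have hcabs : |c| = 1 := by
      have h1 : ‖c • u‖ = a := by rw [hc]; exact hv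
      rw [norm_smul, Real.norm_eq_abs, hu] at h1
      have := hside
      nlinarith [abs_nonneg c]
    rcases abs_eq (by norm_num : (0:ℝ) ≤ 1) |>.1 hcabs with hc1 | hc1
    · -- c = 1 : v = u, contradiction via Cauchy-Schwarz
      rw [hc1, one_smul] at hc
      have hp : ⟪u, v⟫ = a ^ 2 := by
        rw [← hc, real_inner_self_eq_norm_sq, hu]
      have hs : ⟪v, w⟫ = a ^ 2 := by rw [← hE1, hp]
      have hq : ⟪u, w⟫ = -3 * a ^ 2 := by linarith [hE2, hp, hs]
      have hcs := abs_real_inner_le_norm u w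
      rw [hq, hu, hw] at hcs
      have : |(-3 : ℝ) * a ^ 2| = 3 * a ^ 2 := by
        rw [abs_mul, abs_of_nonneg (sq_nonneg a)]; norm_num
      rw [this] at hcs
      nlinarith
    · -- c = -1 : v = -u, then w = u and quadrilateral degenerates
      rw [hc1] at hc
      have hveq : v = -u := by rw [← hc]; simp
      have hp : ⟪u, v⟫ = -a ^ 2 := by
        rw [hveq, inner_neg_right, real_inner_self_eq_norm_sq, hu]
      have hs : ⟪v, w⟫ = -a ^ 2 := by rw [← hE1, hp]
      have hq : ⟪u, w⟫ = a ^ 2 := by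
        have h1 : ⟪v, w⟫ = -⟪u, w⟫ := by rw [hveq, inner_neg_left]
        linarith [hE2, hp, hs, h1]
      have hwu : w = u := by
        have h1 : ⟪u, w⟫ = ‖u‖ * ‖w‖ := by rw [hq, hu, hw]; ring
        have h2 := inner_eq_norm_mul_iff_real.1 h1
        rw [hu, hw] at h2
        have ha0 : a ≠ 0 := ne_of_gt hside
        have := smul_right_injective E2 ha0 h2
        exact this.symm
      have hA3 : A₃ = A₁ := by
        have h1 : A₃ - A₁ = v + u := by rw [hudef, hvdef]; abel
        rw [hveq] at h1
        simp at h1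
        exact sub_eq_zero.1 h1
      have hA4 : A₄ = A₂ := by
        have h1 : A₄ - A₂ = w + v := by rw [hvdef, hwdef]; abel
        rw [hwu, hveq] at h1
        simp at h1
        exact sub_eq_zero.1 h1
      rw [hA3, hA4] at hM
      have hset : ({A₁, A₂, A₁, A₂} : Set E2) = {A₁, A₂} := by
        ext x; simp; try tauto
      rw [hset] at hM
      exact absurd hM (not_interior_pair A₁ A₂ M)
  · -- main case: u, v linearly independent
    have hli : LinearIndependent ℝ ![u, v] :=
      (LinearIndependent.pair_iff' hu0).2 (fun c hc => hdep ⟨c, hc⟩)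
    have hwspan : w ∈ Submodule.span ℝ ({u, v} : Set E2) := by
      rw [span_pair_top u v hli]; trivial
    obtain ⟨α, β, hαβ⟩ := Submodule.mem_span_pair.1 hwspan
    set p := ⟪u, v⟫ with hpdef
    have hvu : ⟪v, u⟫ = p := real_inner_comm u v
    have huu : ⟪u, u⟫ = a ^ 2 := by rw [real_inner_self_eq_norm_sq, hu]
    have hvv : ⟪v, v⟫ = a ^ 2 := by rw [real_inner_self_eq_norm_sq, hv]
    have hq : ⟪u, w⟫ = α * a ^ 2 + β * p := by
      rw [← hαβ, inner_add_right, real_inner_smul_right, real_inner_smul_right, huu, ← hpdef]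
    have hs : ⟪v, w⟫ = α * p + β * a ^ 2 := by
      rw [← hαβ, inner_add_right, real_inner_smul_right, real_inner_smul_right, hvu, hvv]
    have e3 : α ^ 2 * a ^ 2 + β ^ 2 * a ^ 2 + 2 * α * β * p = a ^ 2 := by
      have h1 : ⟪w, w⟫ = a ^ 2 := by rw [real_inner_self_eq_norm_sq, hw]
      rw [← hαβ] at h1
      rw [inner_add_left, inner_add_right, inner_add_right, real_inner_smul_left,
        real_inner_smul_left, real_inner_smul_left, real_inner_smul_left,
        real_inner_smul_right, real_inner_smul_right, real_inner_smul_right,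
        real_inner_smul_right, huu, hvv, hvu, ← hpdef] at h1
      linarith
    have e1 : α * p + β * a ^ 2 = p := by rw [← hs, ← hE1]
    have e2 : p + (α * a ^ 2 + β * p) + (α * p + β * a ^ 2) = -a ^ 2 := by
      rw [← hq, ← hs]; exact hE2
    have h2' : 2 * p + α * a ^ 2 + β * p = -a ^ 2 := by linear_combination e2 - e1
    have hfinal : 4 * p * (a ^ 2) ^ 3 * (a ^ 2 + p) ^ 2 = 0 :=
      core_alg (a ^ 2) p α β (by linarith [e1]) h2' e3
    have hpcase : p = 0 ∨ p = -a ^ 2 := by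
      have ha2 : (0:ℝ) < a ^ 2 := by nlinarith
      rcases mul_eq_zero.1 hfinal with h | h
      · have h4 : p * (4 * (a ^ 2) ^ 3) = 0 := by linear_combination h
        rcases mul_eq_zero.1 h4 with h5 | h5
        · exact Or.inl h5
        · nlinarith [pow_pos ha2 3]
      · have h5 : a ^ 2 + p = 0 := sq_eq_zero_iff.1 h
        right; linarith
    rcases hpcase with hp0 | hpneg
    · -- square case
      have hβ : β = 0 := by
        rw [hp0] at e1
        have ha2 : (0:ℝ) < a ^ 2 := by positivity
        have : β * a ^ 2 = 0 := by linarith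
        rcases mul_eq_zero.1 this with h | h
        · exact h
        · linarith
      have hα : α = -1 := by
        rw [hp0, hβ] at h2'
        have ha2 : (0:ℝ) < a ^ 2 := by positivity
        have : α * a ^ 2 = -a ^ 2 := by linarith
        nlinarith
      have hwneg : w = -u := by
        rw [← hαβ, hα, hβ]; simp
      have ha0 : a ≠ 0 := ne_of_gt hside
      set e : E2 := a⁻¹ • u with hedef
      set f : E2 := a⁻¹ • v with hfdef
      have hee : ⟪e, e⟫ = 1 := by
        rw [hedef, real_inner_smul_left, real_inner_smul_right, huu]
        field_simp
      have hff : ⟪f, f⟫ = 1 := by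
        rw [hfdef, real_inner_smul_left, real_inner_smul_right, hvv]
        field_simp
      have hef : ⟪e, f⟫ = 0 := by
        rw [hedef, hfdef, real_inner_smul_left, real_inner_smul_right, ← hpdef, hp0]
        ring
      have hfe : ⟪f, e⟫ = 0 := by rw [real_inner_comm]; exact hef
      have hne : ‖e‖ = 1 := by
        rw [hedef, norm_smul, Real.norm_eq_abs, abs_inv, abs_of_pos hside, hu]
        field_simp
      have hnf : ‖f‖ = 1 := by
        rw [hfdef, norm_smul, Real.norm_eq_abs, abs_inv, abs_of_pos hside, hv]
        field_simp
      have hspan : ∀ z : E2, z = ⟪z, e⟫ • e + ⟪z, f⟫ • f := parseval2 e f hee hff hef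
      have hspan' : ∀ z : E2, z = ⟪z, f⟫ • f + ⟪z, e⟫ • e := fun z => by
        rw [add_comm]; exact hspan z
      have hue : u = a • e := by rw [hedef, smul_smul, mul_inv_cancel₀ ha0, one_smul]
      have hvf : v = a • f := by rw [hfdef, smul_smul, mul_inv_cancel₀ ha0, one_smul]
      have hQP₁ : A₂ - A₁ = a • e := by rw [← hudef]; exact hue
      have hQP₂ : A₃ - A₂ = a • f := by rw [← hvdef]; exact hvf
      have hQP₃ : A₄ - A₃ = (-a) • e := by rw [← hwdef, hwneg, hue, ← neg_smul]
      have hQP₄ : A₁ - A₄ = (-a) • f := by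
        have h1 : A₁ - A₄ = -(u + v + w) := by rw [hudef, hvdef, hwdef]; abel
        have h2 : u + v + w = v := by rw [hwneg]; abel
        rw [h1, h2, hvf, ← neg_smul]
      have d₁ := foot_bound A₁ A₂ M e f hspan hnf a ha0 hQP₁
      have d₂ := foot_bound A₂ A₃ M f e hspan' hne a ha0 hQP₂
      have d₃ := foot_bound A₃ A₄ M e f hspan hnf (-a) (neg_ne_zero.2 ha0) hQP₃
      have d₄ := foot_bound A₄ A₁ M f e hspan' hne (-a) (neg_ne_zero.2 ha0) hQP₄
      set x := ⟪M - A₁, e⟫ with hxdef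
      set y := ⟪M - A₁, f⟫ with hydef
      have hM2 : M - A₂ = (M - A₁) - a • e := by rw [← hQP₁]; abel
      have hM3 : M - A₃ = (M - A₁) - a • e - a • f := by rw [← hQP₁, ← hQP₂]; abel
      have hM4 : M - A₄ = (M - A₁) - a • f := by
        have h1 : A₄ - A₁ = u + v + w := by rw [hudef, hvdef, hwdef]; abel
        have h2 : A₄ - A₁ = a • f := by rw [h1, hwneg, hvf]; abel
        calc M - A₄ = (M - A₁) - (A₄ - A₁) := by abel
          _ = (M - A₁) - a • f := by rw [h2]
      have hx2 : ⟪M - A₂, e⟫ = x - a := by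
        rw [hM2, inner_sub_left, real_inner_smul_left e e a, hee, ← hxdef]; ring
      have hy2 : ⟪M - A₂, f⟫ = y := by
        rw [hM2, inner_sub_left, real_inner_smul_left e f a, hef, ← hydef]; ring
      have hx3 : ⟪M - A₃, e⟫ = x - a := by
        rw [hM3, inner_sub_left, inner_sub_left, real_inner_smul_left e e a,
          real_inner_smul_left f e a, hee, hfe, ← hxdef]; ring
      have hy3 : ⟪M - A₃, f⟫ = y - a := by
        rw [hM3, inner_sub_left, inner_sub_left, real_inner_smul_left e f a,
          real_inner_smul_left f f a, hef, hff, ← hydef]; ring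
      have hx4 : ⟪M - A₄, e⟫ = x := by
        rw [hM4, inner_sub_left, real_inner_smul_left f e a, hfe, ← hxdef]; ring
      have hy4 : ⟪M - A₄, f⟫ = y - a := by
        rw [hM4, inner_sub_left, real_inner_smul_left f f a, hff, ← hydef]; ring
      rw [hx2] at d₂
      rw [hy3] at d₃
      rw [hx4] at d₄
      have B₁ := bessel2 (M - A₁) e f hne hnf hef
      have B₂ := bessel2 (M - A₂) e f hne hnf hef
      have B₃ := bessel2 (M - A₃) e f hne hnf hef
      have B₄ := bessel2 (M - A₄) e f hne hnf hef
      rw [hx2, hy2] at B₂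
      rw [hx3, hy3] at B₃
      rw [hx4, hy4] at B₄
      rw [← dist_eq_norm] at B₁ B₂ B₃ B₄
      have hs2 : Real.sqrt 2 ^ 2 = 2 := Real.sq_sqrt (by norm_num)
      have hs2n : (0:ℝ) ≤ Real.sqrt 2 := Real.sqrt_nonneg 2
      exact sum_bound (Real.sqrt 2) _ _ _ _ _ _ _ _ _ _ _ _ hs2 hs2n d₁ d₂ d₃ d₄ B₁ B₂ B₃ B₄
    · -- p = -a^2 : contradiction with independence
      exfalso
      have h1 : ⟪u, -v⟫ = ‖u‖ * ‖-v‖ := by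
        rw [inner_neg_right, norm_neg, hu, hv, ← hpdef, hpneg]; ring
      have h2 := inner_eq_norm_mul_iff_real.1 h1
      rw [norm_neg, hu, hv] at h2
      have ha0 : a ≠ 0 := ne_of_gt hside
      have h3 : a • u = a • (-v) := h2
      have h4 := smul_right_injective E2 ha0 h3
      exact hdep ⟨-1, by rw [h4]; simp⟩
end
end

section
/- For any interior point M of a triangle ABC, MA + MB + MC is strictly greater than d_a + d_b + d_c, where d_a, d_b, d_c are the distances from M to the three sides. -/
open EuclideanGeometry Metric

-- aux lemma: if M not on the line through Y,Z (Y ≠ Z), infDist < average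
lemma em_aux (M Y Z : EuclideanSpace ℝ (Fin 2)) (hYZ : Y ≠ Z)
    (hM : M ∉ (affineSpan ℝ ({Y, Z} : Set (EuclideanSpace ℝ (Fin 2))) : Set _)) :
    infDist M (affineSpan ℝ ({Y, Z} : Set (EuclideanSpace ℝ (Fin 2))) : Set _) <
      (dist M Y + dist M Z) / 2 := by
  set P : EuclideanSpace ℝ (Fin 2) := AffineMap.lineMap Y Z (1/2 : ℝ) with hP
  have hmid : P ∈ (affineSpan ℝ ({Y, Z} : Set (EuclideanSpace ℝ (Fin 2))) : Set _) :=
    AffineMap.lineMap_mem_affineSpan_pair _ _ _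
  have h1 : infDist M (affineSpan ℝ ({Y, Z} : Set (EuclideanSpace ℝ (Fin 2))) : Set _) ≤
      dist M P := infDist_le_dist_of_mem hmid
  have hray : ¬ SameRay ℝ (M - Y) (M - Z) := by
    intro h
    obtain ⟨u, a, b, _, _, _, hY, hZ⟩ := h.exists_eq_smul
    apply hM
    have hcol : Collinear ℝ ({M, Y, Z} : Set (EuclideanSpace ℝ (Fin 2))) := by
      rw [collinear_iff_of_mem (Set.mem_insert M _)]
      refine ⟨u, ?_⟩
      rintro p (rfl | rfl | rfl)
      · exact ⟨0, by simp⟩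
      · exact ⟨-a, by rw [neg_smul, ← hY]; abel_nf; simp⟩
      · exact ⟨-b, by rw [neg_smul, ← hZ]; abel_nf; simp⟩
    exact hcol.mem_affineSpan_of_mem_of_ne (by simp) (by simp) (Set.mem_insert _ _) hYZ
  have h2 : dist M P < (dist M Y + dist M Z) / 2 := by
    have key := norm_add_lt_of_not_sameRay hray
    have hm : M - P = (2⁻¹ : ℝ) • ((M - Y) + (M - Z)) := by
      rw [hP, AffineMap.lineMap_apply]
      simp only [vsub_eq_sub, vadd_eq_add]
      module
    rw [dist_eq_norm, dist_eq_norm, dist_eq_norm, hm, norm_smul]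
    simp only [norm_inv, Real.norm_ofNat]
    linarith
  linarith

theorem erdos_mordell_weak
    (A B C M : EuclideanSpace ℝ (Fin 2))
    (hABC : AffineIndependent ℝ ![A, B, C])
    (hM : M ∈ interior (convexHull ℝ ({A, B, C} : Set (EuclideanSpace ℝ (Fin 2))))) :
    dist M A + dist M B + dist M C >
      infDist M (affineSpan ℝ ({B, C} : Set (EuclideanSpace ℝ (Fin 2))) : Set _) +
      infDist M (affineSpan ℝ ({C, A} : Set (EuclideanSpace ℝ (Fin 2))) : Set _) +
      infDist M (affineSpan ℝ ({A, B} : Set (EuclideanSpace ℝ (Fin 2))) : Set _) := by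
  -- build an affine basis
  have htot : affineSpan ℝ (Set.range ![A, B, C]) = ⊤ := by
    rw [hABC.affineSpan_eq_top_iff_card_eq_finrank_add_one]
    simp [finrank_euclideanSpace_fin]
  let b : AffineBasis (Fin 3) ℝ (EuclideanSpace ℝ (Fin 2)) := ⟨![A, B, C], hABC, htot⟩
  have hrange : Set.range ![A, B, C] = ({A, B, C} : Set (EuclideanSpace ℝ (Fin 2))) := by
    ext x
    simp [Matrix.range_cons, Matrix.range_empty]
    tauto
  have hpos : ∀ i, 0 < b.coord i M := by
    have := b.interior_convexHull ▸ (by rw [show Set.range ⇑b = ({A,B,C} : Set _) from hrange]; exact hM :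
      M ∈ interior (convexHull ℝ (Set.range ⇑b)))
    exact this
  -- distinctness
  have hAB : A ≠ B := hABC.injective.ne (by decide : (0 : Fin 3) ≠ 1)
  have hBC : B ≠ C := hABC.injective.ne (by decide : (1 : Fin 3) ≠ 2)
  have hCA : C ≠ A := hABC.injective.ne (by decide : (2 : Fin 3) ≠ 0)
  -- M is not on any of the lines
  have hnotmem : ∀ i : Fin 3, ∀ Y Z : EuclideanSpace ℝ (Fin 2),
      b.coord i Y = 0 → b.coord i Z = 0 →
      M ∉ (affineSpan ℝ ({Y, Z} : Set (EuclideanSpace ℝ (Fin 2))) : Set _) := by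
    intro i Y Z hY hZ hmem
    have : (M - Y) +ᵥ Y ∈ (affineSpan ℝ ({Y, Z} : Set (EuclideanSpace ℝ (Fin 2)))) := by simpa using hmem
    rw [vadd_left_mem_affineSpan_pair] at this
    obtain ⟨r, hr⟩ := this
    have hMeq : M = AffineMap.lineMap Y Z r := by
      rw [AffineMap.lineMap_apply]
      simp only [vsub_eq_sub, vadd_eq_add] at hr ⊢
      rw [hr]; abel
    have : b.coord i M = 0 := by
      rw [hMeq, AffineMap.apply_lineMap, hY, hZ]
      simp
    exact (hpos i).ne' this
  have cb : ∀ i j : Fin 3, i ≠ j → b.coord i (![A,B,C] j) = 0 := fun i j h =>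
    b.coord_apply_ne h
  have h1 : M ∉ (affineSpan ℝ ({B, C} : Set (EuclideanSpace ℝ (Fin 2))) : Set _) :=
    hnotmem 0 B C (cb 0 1 (by decide)) (cb 0 2 (by decide))
  have h2 : M ∉ (affineSpan ℝ ({C, A} : Set (EuclideanSpace ℝ (Fin 2))) : Set _) :=
    hnotmem 1 C A (cb 1 2 (by decide)) (cb 1 0 (by decide))
  have h3 : M ∉ (affineSpan ℝ ({A, B} : Set (EuclideanSpace ℝ (Fin 2))) : Set _) :=
    hnotmem 2 A B (cb 2 0 (by decide)) (cb 2 1 (by decide))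
  have e1 := em_aux M B C hBC h1
  have e2 := em_aux M C A hCA h2
  have e3 := em_aux M A B hAB h3
  linarith
end

section
/- There exists a tetrahedron and an interior point M for which the sum of distances from M to the four vertices is strictly less than 3 times the sum of distances from M to the four faces; hence the Erdős–Mordell constant 2·(n-dependent) does not extend to 3 space with the planar form. -/
/-!
Take a pyramid over a triangle inscribed in the unit circle, with vertices `(1, 0)` and
`(-33/65, ±56/65)` (a rational, nearly equilateral triangle), apex at height `9/10` above the
circumcenter, and let `M` lie at height `1/100` above the circumcenter. The distances from `M` to
the vertices add up to about `0.89 + 3 = 3.89`, those to the faces to about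
`0.01 + 0.437 + 2 · 0.430 ≈ 1.307`, so the ratio is about `2.98 < 3`.

Each face lies in an explicit plane `⟪n, x⟫ = c` with integer normal `n`. These four affine
functionals certify everything: they vanish at three vertices but not at the fourth, which gives
affine independence; `M` lies on the same side of each face as the opposite vertex, which makes it
an interior point; and Cauchy–Schwarz bounds the distance to a face below by `|⟪n, M⟫ - c| / ‖n‖`.
-/

open Metric RealInnerProductSpace Module

section Affine

variable {k V P ι : Type*} [Field k] [AddCommGroup V] [Module k V] [AddTorsor V P]

theorem affineMap_affineCombination_eq_single [Fintype ι] {p : ι → P} {f : P →ᵃ[k] k} {i : ι}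
    (hf : ∀ j, j ≠ i → f (p j) = 0) {w : ι → k} (hw : ∑ j, w j = 1) :
    f (Finset.univ.affineCombination k p w) = w i * f (p i) := by
  rw [Finset.map_affineCombination _ _ _ hw,
    Finset.affineCombination_eq_linear_combination _ _ _ hw,
    Finset.sum_eq_single i (fun j _ hj => by simp [hf j hj]) (by simp)]
  rfl

theorem affineIndependent_of_affineMap_apply_eq_zero [Fintype ι] {p : ι → P}
    (f : ι → P →ᵃ[k] k) (hf : ∀ i j, j ≠ i → f i (p j) = 0) (hfi : ∀ i, f i (p i) ≠ 0) :
    AffineIndependent k p := by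
  rw [affineIndependent_iff_eq_of_fintype_affineCombination_eq]
  intro w₁ w₂ hw₁ hw₂ heq
  funext i
  have h := congrArg (f i) heq
  rw [affineMap_affineCombination_eq_single (hf i) hw₁,
    affineMap_affineCombination_eq_single (hf i) hw₂] at h
  exact mul_right_cancel₀ (hfi i) h

theorem AffineBasis.coord_apply_eq_div (b : AffineBasis ι k P) {f : P →ᵃ[k] k} {i : ι}
    (hf : ∀ j, j ≠ i → f (b j) = 0) (hfi : f (b i) ≠ 0) (x : P) :
    b.coord i x = f x / f (b i) := by
  suffices b.coord i = (f (b i))⁻¹ • f by rw [this]; simp [div_eq_inv_mul]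
  refine AffineMap.ext_on b.tot ?_
  rintro - ⟨j, rfl⟩
  obtain rfl | hj := eq_or_ne j i
  · simp [hfi]
  · simp [b.coord_apply_ne hj.symm, hf j hj]

end Affine

theorem mem_interior_convexHull_of_affineMap {ι E : Type*} [Fintype ι] [NormedAddCommGroup E]
    [NormedSpace ℝ E] [FiniteDimensional ℝ E] {p : ι → E} (f : ι → E →ᵃ[ℝ] ℝ)
    (hcard : Fintype.card ι = finrank ℝ E + 1) (hf : ∀ i j, j ≠ i → f i (p j) = 0) {x : E}
    (hx : ∀ i, 0 < f i x * f i (p i)) : x ∈ interior (convexHull ℝ (Set.range p)) := by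
  have hfi (i : ι) : f i (p i) ≠ 0 := right_ne_zero_of_mul (hx i).ne'
  have hind := affineIndependent_of_affineMap_apply_eq_zero f hf hfi
  let b : AffineBasis ι ℝ E :=
    ⟨p, hind, hind.affineSpan_eq_top_iff_card_eq_finrank_add_one.2 hcard⟩
  change x ∈ interior (convexHull ℝ (Set.range b))
  rw [b.interior_convexHull]
  intro i
  rw [b.coord_apply_eq_div (hf i) (hfi i), ← mul_div_mul_right _ _ (hfi i)]
  exact div_pos (hx i) (mul_self_pos.2 (hfi i))

section Hyperplane

variable {E : Type*} [NormedAddCommGroup E] [InnerProductSpace ℝ E]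

noncomputable def innerSubConst (n : E) (c : ℝ) : E →ᵃ[ℝ] ℝ :=
  (innerₛₗ ℝ n).toAffineMap - AffineMap.const ℝ E c

@[simp]
theorem innerSubConst_apply (n : E) (c : ℝ) (x : E) : innerSubConst n c x = ⟪n, x⟫ - c := rfl

theorem abs_inner_sub_div_norm_le_infDist {s : Set E} (hs : s.Nonempty) {n : E} {c : ℝ}
    (h : ∀ p ∈ s, ⟪n, p⟫ = c) (x : E) :
    |⟪n, x⟫ - c| / ‖n‖ ≤ infDist x (affineSpan ℝ s) := by
  have hspan : Set.EqOn (innerSubConst n c) (AffineMap.const ℝ E 0) (affineSpan ℝ s) :=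
    AffineMap.eqOn_affineSpan fun p hp => by simp [h p hp]
  refine (le_infDist (hs.mono (subset_affineSpan ℝ s))).2 fun y hy => ?_
  have hy : ⟪n, y⟫ = c := sub_eq_zero.1 (hspan hy)
  refine div_le_of_le_mul₀ (norm_nonneg n) dist_nonneg ?_
  calc |⟪n, x⟫ - c| = |⟪n, x - y⟫| := by rw [inner_sub_right, hy]
    _ ≤ ‖n‖ * ‖x - y‖ := abs_real_inner_le_norm n (x - y)
    _ = dist x y * ‖n‖ := by rw [dist_eq_norm, mul_comm]

end Hyperplane

theorem inner_vec₃ (a b c d e f : ℝ) :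
    ⟪!₂[a, b, c], !₂[d, e, f]⟫ = a * d + b * e + c * f := by
  simp [PiLp.inner_apply, Fin.sum_univ_three, mul_comm]

theorem norm_vec₃ (a b c : ℝ) : ‖!₂[a, b, c]‖ = √(a ^ 2 + b ^ 2 + c ^ 2) := by
  simp [EuclideanSpace.norm_eq, Fin.sum_univ_three]

theorem dist_vec₃ (a b c d e f : ℝ) :
    dist !₂[a, b, c] !₂[d, e, f] = √((a - d) ^ 2 + (b - e) ^ 2 + (c - f) ^ 2) := by
  simp [EuclideanSpace.dist_eq, Fin.sum_univ_three, Real.dist_eq]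

noncomputable def tetra : Fin 4 → EuclideanSpace ℝ (Fin 3) :=
  ![!₂[0, 0, 9/10], !₂[1, 0, 0], !₂[-33/65, 56/65, 0], !₂[-33/65, -56/65, 0]]

noncomputable def tetraPoint : EuclideanSpace ℝ (Fin 3) := !₂[0, 0, 1/100]

noncomputable def faceNormal : Fin 4 → EuclideanSpace ℝ (Fin 3) :=
  ![!₂[0, 0, 1], !₂[-39, 0, 22], !₂[-36, 63, -40], !₂[-36, -63, -40]]

noncomputable def faceOffset : Fin 4 → ℝ := ![0, 99/5, -36, -36]

theorem inner_faceNormal_tetra {i j : Fin 4} (hji : j ≠ i) :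
    ⟪faceNormal i, tetra j⟫ = faceOffset i := by
  fin_cases i <;> fin_cases j <;> (try simp at hji) <;>
    norm_num [faceNormal, tetra, faceOffset, inner_vec₃]

theorem innerSubConst_tetraPoint_mul_pos (i : Fin 4) :
    0 < innerSubConst (faceNormal i) (faceOffset i) tetraPoint *
      innerSubConst (faceNormal i) (faceOffset i) (tetra i) := by
  fin_cases i <;> norm_num [faceNormal, tetra, tetraPoint, faceOffset, inner_vec₃]

theorem sum_dist_tetraPoint_tetra_lt : ∑ i, dist tetraPoint (tetra i) < 39 / 10 := by
  have h : √(10001 : ℝ) ≤ 1001 / 10 := Real.sqrt_le_iff.2 (by norm_num)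
  simp only [Fin.sum_univ_four, tetra, tetraPoint, Matrix.cons_val, dist_vec₃]
  norm_num
  linarith

theorem lt_sum_abs_inner_sub_div_norm :
    13 / 10 < ∑ i, |⟪faceNormal i, tetraPoint⟫ - faceOffset i| / ‖faceNormal i‖ := by
  have h₁ : (979 / 50) / 45 ≤ (979 / 50) / √(2005 : ℝ) := by
    gcongr; exact Real.sqrt_le_iff.2 (by norm_num)
  have h₂ : (178 / 5) / 83 ≤ (178 / 5) / √(6865 : ℝ) := by
    gcongr; exact Real.sqrt_le_iff.2 (by norm_num)
  simp only [Fin.sum_univ_four, faceNormal, faceOffset, tetraPoint, Matrix.cons_val, inner_vec₃,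
    norm_vec₃]
  norm_num
  linarith

theorem tetrahedron_erdos_mordell_constant_three_fails :
    ∃ (A : Fin 4 → EuclideanSpace ℝ (Fin 3)) (M : EuclideanSpace ℝ (Fin 3)),
      AffineIndependent ℝ A ∧
      M ∈ interior (convexHull ℝ (Set.range A)) ∧
      ∑ i : Fin 4, dist M (A i) <
        3 * ∑ i : Fin 4,
          infDist M (affineSpan ℝ (A '' {j | j ≠ i}) : Set (EuclideanSpace ℝ (Fin 3))) := by
  let f (i : Fin 4) := innerSubConst (faceNormal i) (faceOffset i)
  have hf (i j : Fin 4) (hji : j ≠ i) : f i (tetra j) = 0 :=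
    sub_eq_zero.2 (inner_faceNormal_tetra hji)
  refine ⟨tetra, tetraPoint,
    affineIndependent_of_affineMap_apply_eq_zero f hf
      fun i => right_ne_zero_of_mul (innerSubConst_tetraPoint_mul_pos i).ne',
    mem_interior_convexHull_of_affineMap f (by simp) hf innerSubConst_tetraPoint_mul_pos, ?_⟩
  calc ∑ i, dist tetraPoint (tetra i) < 3 * (13 / 10) := by
        linarith [sum_dist_tetraPoint_tetra_lt]
    _ < 3 * ∑ i, |⟪faceNormal i, tetraPoint⟫ - faceOffset i| / ‖faceNormal i‖ := by
        gcongr; exact lt_sum_abs_inner_sub_div_norm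
    _ ≤ 3 * ∑ i, infDist tetraPoint (affineSpan ℝ (tetra '' {j | j ≠ i})) := by
        gcongr with i
        refine abs_inner_sub_div_norm_le_infDist (.image _ ⟨i + 1, by simp⟩) ?_ _
        rintro _ ⟨j, hj, rfl⟩
        exact inner_faceNormal_tetra hj
end

section
/- For any triangle ABC and interior point M, the distance from M to vertex A satisfies MA·sin(A) ≥ d_b·sin(C) + d_c·sin(B) — equivalently a·MA ≥ b·d_b + c·d_c — the key lemma in Mordell's proof of the Erdős–Mordell theorem. -/
open EuclideanGeometry Metric Module
open scoped EuclideanSpace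

/-!
In an oriented plane with area form `ω`, the distance from `M` to the line `AC`, times `b = AC`,
is `|ω (C - A) (M - A)|`, and the orientation can be chosen so that `ω (C - A) (M - A)` and
`ω (M - A) (B - A)` are both nonnegative for `M` in the triangle. With `u = B - A`, `w = C - A`,
`x = M - A` this gives
`b c (c d_b + b d_c) = ω x (‖w‖² u - ‖u‖² w) ≤ ‖x‖ ‖‖w‖² u - ‖u‖² w‖ = b c · a · MA`,
because `‖w‖² u - ‖u‖² w` is `b c` times the reflection of `u - w` in the bisector of the angle
at `A`. The law of sines `a : b : c = sin A : sin B : sin C` turns `a MA ≥ c d_b + b d_c` into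
the stated form.
-/

variable {E : Type*} [NormedAddCommGroup E] [InnerProductSpace ℝ E]

theorem norm_sq_smul_sub_sq_smul (u w : E) :
    ‖‖w‖ ^ 2 • u - ‖u‖ ^ 2 • w‖ = ‖u‖ * ‖w‖ * ‖u - w‖ := by
  refine (pow_left_inj₀ (norm_nonneg _) (by positivity) two_ne_zero).1 ?_
  rw [mul_pow, norm_sub_sq_real, norm_sub_sq_real u, norm_smul, norm_smul, real_inner_smul_left,
    real_inner_smul_right]
  simp only [Real.norm_eq_abs, abs_pow, abs_norm]
  ring

theorem LinearMap.nonneg_apply_sub_of_mem_convexHull {F : Type*} [AddCommGroup F] [Module ℝ F]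
    (f : F →ₗ[ℝ] ℝ) {s : Set F} {a x : F} (hs : ∀ y ∈ s, 0 ≤ f (y - a))
    (hx : x ∈ convexHull ℝ s) : 0 ≤ f (x - a) := by
  have hs' : s ⊆ {y | f a ≤ f y} := fun y hy => by simpa using hs y hy
  simpa using convexHull_min hs' (convex_halfSpace_ge f.isLinear (f a)) hx

attribute [local instance] FiniteDimensional.of_fact_finrank_eq_two

namespace Orientation

variable [Fact (finrank ℝ E = 2)] (o : Orientation ℝ E (Fin 2))

local notation "ω" => o.areaForm

theorem exists_areaForm_nonneg (x y : E) : ∃ o : Orientation ℝ E (Fin 2), 0 ≤ o.areaForm x y := by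
  let o₀ := (finBasisOfFinrankEq ℝ E (Fact.out : finrank ℝ E = 2)).orientation
  rcases le_total 0 (o₀.areaForm x y) with h | h
  · exact ⟨o₀, h⟩
  · exact ⟨-o₀, by simpa [areaForm_neg_orientation] using h⟩

theorem infDist_affineSpan_pair_mul_dist (p q m : E) :
    infDist m (affineSpan ℝ ({p, q} : Set E)) * dist p q = |ω (q - p) (m - p)| := by
  set L := affineSpan ℝ ({p, q} : Set E)
  have : Nonempty L := ⟨⟨p, left_mem_affineSpan_pair ℝ p q⟩⟩
  set F : E := ↑(orthogonalProjection L m)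
  have hdir : L.direction = ℝ ∙ (q - p) := by
    rw [direction_affineSpan, vectorSpan_pair_rev, vsub_eq_sub]
  have hperp : inner ℝ (q - p) (m - F) = 0 := by
    have h : m - F ∈ L.directionᗮ := vsub_orthogonalProjection_mem_direction_orthogonal L m
    rw [hdir] at h
    exact Submodule.mem_orthogonal_singleton_iff_inner_right.1 h
  have hfoot : ω (q - p) (F - p) = 0 := by
    have h : F - p ∈ ℝ ∙ (q - p) := by
      rw [← hdir, ← vsub_eq_sub]
      exact L.vsub_mem_direction (orthogonalProjection_mem m) (left_mem_affineSpan_pair ℝ p q)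
    obtain ⟨r, hr⟩ := Submodule.mem_span_singleton.1 h
    rw [← hr, map_smul, areaForm_apply_self, smul_zero]
  have hshift : ω (q - p) (m - p) = ω (q - p) (m - F) := by
    rw [show m - p = (m - F) + (F - p) by abel, map_add, hfoot, add_zero]
  rw [← dist_orthogonalProjection_eq_infDist, hshift, o.abs_areaForm_of_orthogonal hperp,
    dist_eq_norm, dist_eq_norm', mul_comm]

theorem areaForm_nonneg_of_mem_convexHull {A B C M : E} (h : 0 ≤ ω (C - A) (B - A))
    (hM : M ∈ convexHull ℝ {A, B, C}) : 0 ≤ ω (C - A) (M - A) ∧ 0 ≤ ω (M - A) (B - A) := by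
  constructor
  · refine (ω (C - A)).nonneg_apply_sub_of_mem_convexHull ?_ hM
    rintro y (rfl | rfl | rfl) <;>
      simp only [sub_self, map_zero, areaForm_apply_self, le_refl, h]
  · refine (o.areaForm.flip (B - A)).nonneg_apply_sub_of_mem_convexHull ?_ hM
    rintro y (rfl | rfl | rfl) <;>
      simp only [LinearMap.flip_apply, sub_self, map_zero, areaForm_apply_self, le_refl, h]

theorem sq_norm_mul_areaForm_add_le (u w x : E) :
    ‖u‖ ^ 2 * ω w x + ‖w‖ ^ 2 * ω x u ≤ ‖x‖ * (‖u‖ * ‖w‖ * ‖u - w‖) := by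
  calc ‖u‖ ^ 2 * ω w x + ‖w‖ ^ 2 * ω x u = ω x (‖w‖ ^ 2 • u - ‖u‖ ^ 2 • w) := by
        rw [o.areaForm_swap w x]; simp only [map_sub, map_smul, smul_eq_mul]; ring
    _ ≤ ‖x‖ * ‖‖w‖ ^ 2 • u - ‖u‖ ^ 2 • w‖ := o.areaForm_le _ _
    _ = ‖x‖ * (‖u‖ * ‖w‖ * ‖u - w‖) := by rw [norm_sq_smul_sub_sq_smul]

end Orientation

theorem mordell_inequality_of_mem_convexHull [Fact (finrank ℝ E = 2)] {A B C M : E}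
    (hAB : A ≠ B) (hAC : A ≠ C) (hM : M ∈ convexHull ℝ {A, B, C}) :
    dist A B * infDist M (affineSpan ℝ ({C, A} : Set E)) +
        dist A C * infDist M (affineSpan ℝ ({A, B} : Set E)) ≤
      dist B C * dist M A := by
  obtain ⟨o, ho⟩ := Orientation.exists_areaForm_nonneg (C - A) (B - A)
  obtain ⟨hb, hc⟩ := o.areaForm_nonneg_of_mem_convexHull ho hM
  have hdb : infDist M (affineSpan ℝ ({C, A} : Set E)) * dist A C =
      o.areaForm (C - A) (M - A) := by
    rw [Set.pair_comm, o.infDist_affineSpan_pair_mul_dist, abs_of_nonneg hb]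
  have hdc : infDist M (affineSpan ℝ ({A, B} : Set E)) * dist A B =
      o.areaForm (M - A) (B - A) := by
    rw [o.infDist_affineSpan_pair_mul_dist, o.areaForm_swap, abs_neg, abs_of_nonneg hc]
  have key := o.sq_norm_mul_areaForm_add_le (B - A) (C - A) (M - A)
  rw [sub_sub_sub_cancel_right, ← dist_eq_norm', ← dist_eq_norm', ← dist_eq_norm,
    ← dist_eq_norm, ← hdb, ← hdc] at key
  refine le_of_mul_le_mul_left ?_ (mul_pos (dist_pos.2 hAB) (dist_pos.2 hAC))
  linear_combination key

theorem mordell_key_lemma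
    (A B C M : EuclideanSpace ℝ (Fin 2))
    (hABC : AffineIndependent ℝ ![A, B, C])
    (hM : M ∈ interior (convexHull ℝ ({A, B, C} : Set (EuclideanSpace ℝ (Fin 2))))) :
    dist M A * Real.sin (∠ B A C) ≥
      infDist M (affineSpan ℝ ({C, A} : Set (EuclideanSpace ℝ (Fin 2))) : Set _) *
        Real.sin (∠ B C A) +
      infDist M (affineSpan ℝ ({A, B} : Set (EuclideanSpace ℝ (Fin 2))) : Set _) *
        Real.sin (∠ A B C) := by
  have hAB : A ≠ B := by simpa using hABC.injective.ne (show (0 : Fin 3) ≠ 1 by decide)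
  have hAC : A ≠ C := by simpa using hABC.injective.ne (show (0 : Fin 3) ≠ 2 by decide)
  have hBC : B ≠ C := by simpa using hABC.injective.ne (show (1 : Fin 3) ≠ 2 by decide)
  have hside := mordell_inequality_of_mem_convexHull hAB hAC (interior_subset hM)
  have hsinA : 0 ≤ Real.sin (∠ B A C) := InnerProductGeometry.sin_angle_nonneg _ _
  have hsinB := sin_angle_mul_dist_eq_sin_angle_mul_dist A B C
  have hsinC := sin_angle_mul_dist_eq_sin_angle_mul_dist A C B
  rw [angle_comm C A B, dist_comm C A] at hsinB
  rw [angle_comm A C B, dist_comm C B, dist_comm B A] at hsinC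
  refine le_of_mul_le_mul_left ?_ (dist_pos.2 hBC)
  linear_combination mul_le_mul_of_nonneg_left hside hsinA
    + infDist M (affineSpan ℝ ({C, A} : Set (EuclideanSpace ℝ (Fin 2)))) * hsinC
    + infDist M (affineSpan ℝ ({A, B} : Set (EuclideanSpace ℝ (Fin 2)))) * hsinB
end
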